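/- Let F_l be a left Gabriel filter and F_r a right Gabriel filter on a ring R, and ₗF_r the symmetric filter they induce. If F_l and F_r are both differential, then ₗF_r is differential, i.e. for every R-bimodule M, every derivation δ on R and every δ-derivation d on M, d(ₗt_r(M)) ⊆ ₗt_r(M). -/

import Mathlib

open MulOpposite TensorProduct

/-- A derivation on a ring `S`: an additive map satisfying the Leibniz rule
`δ (a * b) = δ a * b + a * δ b`. -/
def IsDerivation {S : Type*} [Ring S] (δ : S → S) : Prop :=
  (∀ a b : S, δ (a + b) = δ a + δ b) ∧ (∀ a b : S, δ (a * b) = δ a * b + a * δ b)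

/-- A Gabriel filter of left ideals of a ring `S`.  Taking `S = Rᵐᵒᵖ`, this encodes a
Gabriel filter of right ideals of `R`. -/
structure GabrielFilter (S : Type*) [Ring S] where
  sets : Set (Ideal S)
  top_mem : ⊤ ∈ sets
  mono : ∀ ⦃I J : Ideal S⦄, I ∈ sets → I ≤ J → J ∈ sets
  inf_mem : ∀ ⦃I J : Ideal S⦄, I ∈ sets → J ∈ sets → I ⊓ J ∈ sets
  quot_mem : ∀ ⦃I : Ideal S⦄, I ∈ sets → ∀ s : S,
    Submodule.comap (LinearMap.toSpanSingleton S S s) I ∈ sets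
  trans : ∀ ⦃I J : Ideal S⦄, J ∈ sets →
    (∀ s ∈ J, Submodule.comap (LinearMap.toSpanSingleton S S s) I ∈ sets) → I ∈ sets

/-- The torsion set of a module for the torsion theory corresponding to a filter `𝔉` of
ideals: the elements whose annihilator belongs to `𝔉`. -/
def torsionSet {S : Type*} [Ring S] (𝔉 : Set (Ideal S)) (M : Type*) [AddCommGroup M]
    [Module S M] : Set M :=
  {x : M | LinearMap.ker (LinearMap.toSpanSingleton S M x) ∈ 𝔉}

/-- The enveloping ring `R ⊗_ℤ Rᵐᵒᵖ`; an `R`-bimodule is the same thing as a right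
`R ⊗_ℤ Rᵐᵒᵖ`-module, i.e. a left `(R ⊗_ℤ Rᵐᵒᵖ)ᵐᵒᵖ`-module, via `x • (r ⊗ s) = s x r`. -/
abbrev Env (R : Type*) [Ring R] := R ⊗[ℤ] Rᵐᵒᵖ

/-- The left annihilator of an element of an `R`-bimodule, a left ideal of `R`:
`ann_l(x) = {s : R | s • x = 0}`, where the left action of `s` is the action of
`1 ⊗ op s`. -/
def lAnn {R : Type*} [Ring R] (M : Type*) [AddCommGroup M] [Module (Env R)ᵐᵒᵖ M]
    (x : M) : Ideal R where
  carrier := {s : R | op ((1 : R) ⊗ₜ[ℤ] op s) • x = 0}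
  zero_mem' := by simp; exact zero_smul (Env R)ᵐᵒᵖ x
  add_mem' := by
    intro a b ha hb
    simp only [Set.mem_setOf_eq] at *
    rw [show ((1 : R) ⊗ₜ[ℤ] op (a + b)) = (1 : R) ⊗ₜ[ℤ] op a + (1 : R) ⊗ₜ[ℤ] op b by
        rw [op_add, TensorProduct.tmul_add],
      op_add, add_smul, ha, hb, add_zero]
  smul_mem' := by
    intro c s hs
    simp only [Set.mem_setOf_eq, smul_eq_mul] at *
    rw [show ((1 : R) ⊗ₜ[ℤ] op (c * s)) = ((1 : R) ⊗ₜ[ℤ] op s) * ((1 : R) ⊗ₜ[ℤ] op c) by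
        rw [Algebra.TensorProduct.tmul_mul_tmul, one_mul, ← op_mul],
      op_mul, mul_smul, hs, smul_zero]

/-- The right annihilator of an element of an `R`-bimodule, a right ideal of `R`
(encoded as a left ideal of `Rᵐᵒᵖ`): `ann_r(x) = {r | x • r = 0}`, where the right
action of `r` is the action of `r ⊗ 1`. -/
def rAnn {R : Type*} [Ring R] (M : Type*) [AddCommGroup M] [Module (Env R)ᵐᵒᵖ M]
    (x : M) : Ideal Rᵐᵒᵖ where
  carrier := {j : Rᵐᵒᵖ | op (unop j ⊗ₜ[ℤ] (1 : Rᵐᵒᵖ)) • x = 0}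
  zero_mem' := by simp; exact zero_smul (Env R)ᵐᵒᵖ x
  add_mem' := by
    intro a b ha hb
    simp only [Set.mem_setOf_eq] at *
    rw [show (unop (a + b) ⊗ₜ[ℤ] (1 : Rᵐᵒᵖ)) =
          unop a ⊗ₜ[ℤ] (1 : Rᵐᵒᵖ) + unop b ⊗ₜ[ℤ] (1 : Rᵐᵒᵖ) by
        rw [unop_add, TensorProduct.add_tmul],
      op_add, add_smul, ha, hb, add_zero]
  smul_mem' := by
    intro c j hj
    simp only [Set.mem_setOf_eq, smul_eq_mul] at *
    rw [show (unop (c * j) ⊗ₜ[ℤ] (1 : Rᵐᵒᵖ)) =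
          (unop j ⊗ₜ[ℤ] (1 : Rᵐᵒᵖ)) * (unop c ⊗ₜ[ℤ] (1 : Rᵐᵒᵖ)) by
        rw [Algebra.TensorProduct.tmul_mul_tmul, one_mul, unop_mul],
      op_mul, mul_smul, hj, smul_zero]

/-- The symmetric annihilator of an element of a bimodule: the right ideal
`{t ∈ R ⊗_ℤ Rᵐᵒᵖ | x t = 0}`. -/
def symAnn {R : Type*} [Ring R] (M : Type*) [AddCommGroup M] [Module (Env R)ᵐᵒᵖ M]
    (x : M) : Ideal (Env R)ᵐᵒᵖ :=
  LinearMap.ker (LinearMap.toSpanSingleton (Env R)ᵐᵒᵖ M x)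

/-- The right ideal `J ⊗ Rᵐᵒᵖ + R ⊗ I` of `R ⊗_ℤ Rᵐᵒᵖ` generated by a left ideal `I`
and a right ideal `J` of `R`. -/
def symGen {R : Type*} [Ring R] (I : Ideal R) (J : Ideal Rᵐᵒᵖ) : Ideal (Env R)ᵐᵒᵖ :=
  Ideal.span ((fun j : Rᵐᵒᵖ => op (unop j ⊗ₜ[ℤ] (1 : Rᵐᵒᵖ))) '' (J : Set Rᵐᵒᵖ) ∪
    (fun i : R => op ((1 : R) ⊗ₜ[ℤ] op i)) '' (I : Set R))

/-- The symmetric Gabriel filter induced by a left Gabriel filter `Fl` and a right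
Gabriel filter `Fr`: the right ideals of `R ⊗_ℤ Rᵐᵒᵖ` containing `J ⊗ Rᵐᵒᵖ + R ⊗ I` for
some `I ∈ Fl` and `J ∈ Fr`. -/
def symSets {R : Type*} [Ring R] (Fl : GabrielFilter R) (Fr : GabrielFilter Rᵐᵒᵖ) :
    Set (Ideal (Env R)ᵐᵒᵖ) :=
  {K | ∃ I ∈ Fl.sets, ∃ J ∈ Fr.sets, symGen I J ≤ K}

/-- The torsion submodule of a bimodule for the symmetric torsion theory induced by `Fl`
and `Fr`: `ₗt_r(M) = t_l(M) ∩ t_r(M)`. -/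
def symTorsion {R : Type*} [Ring R] (Fl : GabrielFilter R) (Fr : GabrielFilter Rᵐᵒᵖ)
    (M : Type*) [AddCommGroup M] [Module (Env R)ᵐᵒᵖ M] : Set M :=
  {x : M | lAnn M x ∈ Fl.sets} ∩ {x : M | rAnn M x ∈ Fr.sets}

/-- `δ'` is the derivation induced on `R ⊗_ℤ Rᵐᵒᵖ` by the derivation `δ` on `R`:
`δ̄(r ⊗ s) = δ r ⊗ s + r ⊗ δ s`. -/
def IsInducedDerivation {R : Type*} [Ring R] (δ : R → R) (δ' : Env R → Env R) : Prop :=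
  (∀ a b : Env R, δ' (a + b) = δ' a + δ' b) ∧
    ∀ r s : R, δ' (r ⊗ₜ[ℤ] op s) = δ r ⊗ₜ[ℤ] op s + r ⊗ₜ[ℤ] op (δ s)

/-- `d` is a `δ`-derivation on the `R`-bimodule `M`: `d` is additive,
`d (x r) = (d x) r + x (δ r)` and `d (s x) = (δ s) x + s (d x)`. -/
def IsBimodDerivation {R : Type*} [Ring R] (δ : R → R) {M : Type*} [AddCommGroup M]
    [Module (Env R)ᵐᵒᵖ M] (d : M → M) : Prop :=
  (∀ x y : M, d (x + y) = d x + d y) ∧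
  (∀ (x : M) (r : R),
    d (op (r ⊗ₜ[ℤ] (1 : Rᵐᵒᵖ)) • x) =
      op (r ⊗ₜ[ℤ] (1 : Rᵐᵒᵖ)) • d x + op (δ r ⊗ₜ[ℤ] (1 : Rᵐᵒᵖ)) • x) ∧
  (∀ (x : M) (s : R),
    d (op ((1 : R) ⊗ₜ[ℤ] op s) • x) =
      op ((1 : R) ⊗ₜ[ℤ] op (δ s)) • x + op ((1 : R) ⊗ₜ[ℤ] op s) • d x)

/-- The symmetric filter induced by `Fl` and `Fr` is differential: for every `I` in the
filter there is `K` in the filter with `δ̄(K) ⊆ I` for all derivations `δ` on `R`. -/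
def IsSymDifferential {R : Type*} [Ring R] (Fl : GabrielFilter R)
    (Fr : GabrielFilter Rᵐᵒᵖ) : Prop :=
  ∀ I ∈ symSets Fl Fr, ∃ K ∈ symSets Fl Fr, ∀ δ : R → R, IsDerivation δ →
    ∀ δ' : Env R → Env R, IsInducedDerivation δ δ' →
      ∀ t : (Env R)ᵐᵒᵖ, t ∈ K → op (δ' (unop t)) ∈ I

/-- `q : M → Q` realizes `Q` as the symmetric module of quotients of the bimodule `M`
with respect to the symmetric filter induced by `Fl` and `Fr`: the kernel of `q` is
`ₗt_r(M)`, `Q` is torsion free, the cokernel of `q` is torsion, and `Q` is closed. -/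
structure IsSymModuleOfQuotients {R : Type*} [Ring R] (Fl : GabrielFilter R)
    (Fr : GabrielFilter Rᵐᵒᵖ) {M Q : Type*} [AddCommGroup M] [Module (Env R)ᵐᵒᵖ M]
    [AddCommGroup Q] [Module (Env R)ᵐᵒᵖ Q] (q : M →ₗ[(Env R)ᵐᵒᵖ] Q) : Prop where
  ker_eq : (LinearMap.ker q : Set M) = symTorsion Fl Fr M
  torsionFree : symTorsion Fl Fr Q = {0}
  coker_torsion : ∀ y : Q,
    Submodule.comap (LinearMap.toSpanSingleton (Env R)ᵐᵒᵖ Q y) (LinearMap.range q) ∈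
      symSets Fl Fr
  closed : ∀ K ∈ symSets Fl Fr, ∀ f : ↥K →ₗ[(Env R)ᵐᵒᵖ] Q,
    ∃ g : (Env R)ᵐᵒᵖ →ₗ[(Env R)ᵐᵒᵖ] Q, ∀ t : ↥K, g ↑t = f t

universe u

/-- A left Gabriel filter on `R` is differential if for every `I` in the filter there is
`J` in the filter with `δ(J) ⊆ I` for every derivation `δ` on `R`. -/
def IsDifferentialLeft {R : Type*} [Ring R] (Fl : GabrielFilter R) : Prop :=
  ∀ I ∈ Fl.sets, ∃ J ∈ Fl.sets, ∀ δ : R → R, IsDerivation δ → ∀ r ∈ J, δ r ∈ I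

/-- A right Gabriel filter on `R` (encoded over `Rᵐᵒᵖ`) is differential if for every `I`
in the filter there is `J` in the filter with `δ(J) ⊆ I` for every derivation `δ`. -/
def IsDifferentialRight {R : Type*} [Ring R] (Fr : GabrielFilter Rᵐᵒᵖ) : Prop :=
  ∀ I ∈ Fr.sets, ∃ J ∈ Fr.sets, ∀ δ : R → R, IsDerivation δ →
    ∀ x : Rᵐᵒᵖ, x ∈ J → op (δ (unop x)) ∈ I

namespace IsDerivation

variable {S : Type*} [Ring S] {δ : S → S}

theorem map_zero (hδ : IsDerivation δ) : δ 0 = 0 := by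
  simpa using hδ.1 0 0

theorem map_one (hδ : IsDerivation δ) : δ 1 = 0 := by
  simpa using hδ.2 1 1

protected theorem op (hδ : IsDerivation δ) : IsDerivation fun a : Sᵐᵒᵖ => op (δ (unop a)) :=
  ⟨fun a b => by simp [hδ.1], fun a b => by simp [hδ.2, add_comm]⟩

/-- Only `δ (span T) ⊆ I` is claimed, not `δ (span T) ⊆ span T`: the term `δ c * a` of
`δ (c * a)` lies in `I` because `a ∈ span T ⊆ I`. -/
theorem map_mem_of_mem_span (hδ : IsDerivation δ) {I : Ideal S} {T : Set S} (hT : T ⊆ I)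
    (hδT : ∀ a ∈ T, δ a ∈ I) {a : S} (ha : a ∈ Ideal.span T) : δ a ∈ I := by
  have key : a ∈ I ∧ δ a ∈ I := by
    induction ha using Submodule.span_induction with
    | mem a ha => exact ⟨hT ha, hδT a ha⟩
    | zero => exact ⟨I.zero_mem, by rw [hδ.map_zero]; exact I.zero_mem⟩
    | add a b _ _ ha hb => exact ⟨I.add_mem ha.1 hb.1, by rw [hδ.1]; exact I.add_mem ha.2 hb.2⟩
    | smul c a _ ha =>
      refine ⟨I.smul_mem c ha.1, ?_⟩
      rw [smul_eq_mul, hδ.2]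
      exact I.add_mem (I.mul_mem_left _ ha.1) (I.mul_mem_left c ha.2)
  exact key.2

end IsDerivation

namespace IsInducedDerivation

variable {R : Type*} [Ring R] {δ : R → R} {δ' : Env R → Env R}

theorem isDerivation (hδ : IsDerivation δ) (hδ' : IsInducedDerivation δ δ') :
    IsDerivation δ' := by
  have h0 : δ' 0 = 0 := by simpa using hδ'.1 0 0
  refine ⟨hδ'.1, fun a b => ?_⟩
  induction a using TensorProduct.induction_on with
  | zero => simp [h0]
  | add x y hx hy => simp only [add_mul, hδ'.1, hx, hy]; abel
  | tmul r s =>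
    induction b using TensorProduct.induction_on with
    | zero => simp [h0]
    | add x y hx hy => simp only [mul_add, hδ'.1, hx, hy]; abel
    | tmul r' s' =>
      induction s using MulOpposite.rec' with | _ s =>
      induction s' using MulOpposite.rec' with | _ s' =>
      rw [Algebra.TensorProduct.tmul_mul_tmul, ← op_mul, hδ'.2, hδ.2, hδ.2, hδ'.2, hδ'.2]
      simp only [op_add, TensorProduct.add_tmul, TensorProduct.tmul_add, add_mul,
        mul_add, Algebra.TensorProduct.tmul_mul_tmul, ← op_mul]
      abel

theorem apply_tmul_one (hδ : IsDerivation δ) (hδ' : IsInducedDerivation δ δ') (r : R) :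
    δ' (r ⊗ₜ[ℤ] (1 : Rᵐᵒᵖ)) = δ r ⊗ₜ[ℤ] (1 : Rᵐᵒᵖ) := by
  simpa [hδ.map_one] using hδ'.2 r 1

theorem apply_one_tmul (hδ : IsDerivation δ) (hδ' : IsInducedDerivation δ δ') (s : R) :
    δ' ((1 : R) ⊗ₜ[ℤ] op s) = (1 : R) ⊗ₜ[ℤ] op (δ s) := by
  simpa [hδ.map_one] using hδ'.2 1 s

end IsInducedDerivation

section Symmetric

variable {R : Type*} [Ring R]

theorem symGen_le_iff {I : Ideal R} {J : Ideal Rᵐᵒᵖ} {K : Ideal (Env R)ᵐᵒᵖ} :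
    symGen I J ≤ K ↔
      (∀ j ∈ J, op (unop j ⊗ₜ[ℤ] (1 : Rᵐᵒᵖ)) ∈ K) ∧ ∀ i ∈ I, op ((1 : R) ⊗ₜ[ℤ] op i) ∈ K := by
  simp only [symGen, Ideal.span_le, Set.union_subset_iff, Set.image_subset_iff]
  rfl

/-- The witness for `symGen I₀ J₀` is `symGen (I₀ ⊓ I₁) (J₀ ⊓ J₁)`, where `δ (I₁) ⊆ I₀` and
`δ (J₁) ⊆ J₀`: then `δ̄` maps its generators `j ⊗ 1` and `1 ⊗ i` to `δ j ⊗ 1` and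
`1 ⊗ δ i`, which are again generators of `symGen I₀ J₀`. -/
theorem isSymDifferential_of_isDifferential {Fl : GabrielFilter R} {Fr : GabrielFilter Rᵐᵒᵖ}
    (hl : IsDifferentialLeft Fl) (hr : IsDifferentialRight Fr) : IsSymDifferential Fl Fr := by
  rintro K ⟨I₀, hI₀, J₀, hJ₀, hK⟩
  obtain ⟨I₁, hI₁, hδI₁⟩ := hl I₀ hI₀
  obtain ⟨J₁, hJ₁, hδJ₁⟩ := hr J₀ hJ₀
  refine ⟨symGen (I₀ ⊓ I₁) (J₀ ⊓ J₁),
    ⟨_, Fl.inf_mem hI₀ hI₁, _, Fr.inf_mem hJ₀ hJ₁, le_rfl⟩, fun δ hδ δ' hδ' t ht => ?_⟩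
  obtain ⟨hKJ, hKI⟩ := symGen_le_iff.mp hK
  refine (hδ'.isDerivation hδ).op.map_mem_of_mem_span ?_ ?_ ht
  · rintro _ (⟨j, hj, rfl⟩ | ⟨i, hi, rfl⟩)
    exacts [hKJ j hj.1, hKI i hi.1]
  · rintro _ (⟨j, hj, rfl⟩ | ⟨i, hi, rfl⟩)
    · simpa [hδ'.apply_tmul_one hδ] using hKJ _ (hδJ₁ δ hδ j hj.2)
    · simpa [hδ'.apply_one_tmul hδ] using hKI _ (hδI₁ δ hδ i hi.2)

end Symmetric

namespace IsBimodDerivation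

variable {R : Type*} [Ring R] {δ : R → R} {M : Type*} [AddCommGroup M]
  [Module (Env R)ᵐᵒᵖ M] {d : M → M}

theorem map_zero (hd : IsBimodDerivation δ d) : d 0 = 0 := by
  simpa using hd.1 0 0

theorem lAnn_inf_le (hd : IsBimodDerivation δ d) {x : M} {J : Ideal R}
    (hJ : ∀ s ∈ J, δ s ∈ lAnn M x) : lAnn M x ⊓ J ≤ lAnn M (d x) := by
  rintro s ⟨hs, hsJ⟩
  have hδs : op ((1 : R) ⊗ₜ[ℤ] op (δ s)) • x = 0 := hJ s hsJ
  have hds := hd.2.2 x s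
  rwa [show op ((1 : R) ⊗ₜ[ℤ] op s) • x = 0 from hs, hd.map_zero, hδs, zero_add, eq_comm]
    at hds

theorem rAnn_inf_le (hd : IsBimodDerivation δ d) {x : M} {J : Ideal Rᵐᵒᵖ}
    (hJ : ∀ j ∈ J, op (δ (unop j)) ∈ rAnn M x) : rAnn M x ⊓ J ≤ rAnn M (d x) := by
  rintro j ⟨hj, hjJ⟩
  have hδj : op (δ (unop j) ⊗ₜ[ℤ] (1 : Rᵐᵒᵖ)) • x = 0 := hJ j hjJ
  have hdj := hd.2.1 x (unop j)
  rwa [show op (unop j ⊗ₜ[ℤ] (1 : Rᵐᵒᵖ)) • x = 0 from hj, hd.map_zero, hδj, add_zero,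
    eq_comm] at hdj

theorem apply_mem_symTorsion {Fl : GabrielFilter R} {Fr : GabrielFilter Rᵐᵒᵖ}
    (hl : IsDifferentialLeft Fl) (hr : IsDifferentialRight Fr) (hδ : IsDerivation δ)
    (hd : IsBimodDerivation δ d) {x : M} (hx : x ∈ symTorsion Fl Fr M) :
    d x ∈ symTorsion Fl Fr M := by
  obtain ⟨hxl, hxr⟩ := hx
  obtain ⟨I, hI, hδI⟩ := hl _ hxl
  obtain ⟨J, hJ, hδJ⟩ := hr _ hxr
  exact ⟨Fl.mono (Fl.inf_mem hxl hI) (hd.lAnn_inf_le (hδI δ hδ)),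
    Fr.mono (Fr.inf_mem hxr hJ) (hd.rAnn_inf_le (hδJ δ hδ))⟩

end IsBimodDerivation

/-- If the left Gabriel filter `Fl` and the right Gabriel filter `Fr`
are both differential, then the induced symmetric filter `ₗF_r` is differential, i.e.
`d(ₗt_r(M)) ⊆ ₗt_r(M)` for every `R`-bimodule `M`, every derivation `δ` on `R` and every
`δ`-derivation `d` on `M`. -/
theorem symDifferential_of_differential {R : Type u} [Ring R]
    (Fl : GabrielFilter R) (Fr : GabrielFilter Rᵐᵒᵖ)
    (hl : IsDifferentialLeft Fl) (hr : IsDifferentialRight Fr) :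
    IsSymDifferential Fl Fr ∧
      ∀ (M : Type u) [AddCommGroup M] [Module (Env R)ᵐᵒᵖ M],
        ∀ δ : R → R, IsDerivation δ → ∀ d : M → M, IsBimodDerivation δ d →
          ∀ x ∈ symTorsion Fl Fr M, d x ∈ symTorsion Fl Fr M :=
  ⟨isSymDifferential_of_isDifferential hl hr,
    fun _ _ _ _ hδ _ hd _ hx => hd.apply_mem_symTorsion hl hr hδ hx⟩
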